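/- arXiv:math/9811008 — 2 statements merged into one kernel-verified Lean document; each statement's English description precedes it below -/
import Mathlib

section
/- Let M be a proper geodesic metric space satisfying the CN inequality (i.e., a proper CAT(0) space). Let γ and γ_m (m ∈ ℕ) be geodesic rays in M such that for every T > 0, sup_{0 ≤ t ≤ T} d(γ_m(t), γ(t)) → 0 as m → ∞, and let (b_m) be a sequence in M converging to b ∈ M. Then β_{γ_m}(b_m) → β_γ(b); that is, the Busemann function β(γ, b) = β_γ(b) is (sequentially) jointly continuous in the ray γ (with the topology of uniform convergence on compact sets) and the point b. -/
open Metric Filter Set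

/-- A geodesic ray in a metric space: an isometric embedding of `[0,∞)`,
modelled as a map `ℝ → M` that is isometric on nonnegative reals. -/
def IsGeodesicRay {M : Type*} [MetricSpace M] (γ : ℝ → M) : Prop :=
  ∀ s t : ℝ, 0 ≤ s → 0 ≤ t → dist (γ s) (γ t) = |s - t|

/-- The Busemann function of a geodesic ray:
`β_γ(b) = sup_{t ≥ 0} (t − d(b, γ(t)))`. -/
noncomputable def busemann {M : Type*} [MetricSpace M] (γ : ℝ → M) (b : M) : ℝ :=
  sSup {x : ℝ | ∃ t : ℝ, 0 ≤ t ∧ x = t - dist b (γ t)}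

/-- The (closed) horoball of `γ` at level `s`: `{p | β_γ(p) ≥ s}`. -/
def horoball {M : Type*} [MetricSpace M] (γ : ℝ → M) (s : ℝ) : Set M :=
  {p : M | s ≤ busemann γ p}

/-- `M` is a geodesic metric space: any two points are joined by a geodesic segment. -/
def IsGeodesicSpace (M : Type*) [MetricSpace M] : Prop :=
  ∀ a b : M, ∃ σ : ℝ → M, σ 0 = a ∧ σ (dist a b) = b ∧
    ∀ s t : ℝ, s ∈ Set.Icc 0 (dist a b) → t ∈ Set.Icc 0 (dist a b) →
      dist (σ s) (σ t) = |s - t|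

/-- The CN (Bruhat–Tits) inequality; a geodesic space satisfying it is CAT(0). -/
def CNInequality (M : Type*) [MetricSpace M] : Prop :=
  ∀ x y z m : M, dist y m = dist y z / 2 → dist m z = dist y z / 2 →
    dist x m ^ 2 ≤ dist x y ^ 2 / 2 + dist x z ^ 2 / 2 - dist y z ^ 2 / 4

/-- Two geodesic rays are asymptotic if they stay at bounded distance. -/
def AsymptoticRays {M : Type*} [MetricSpace M] (γ γ' : ℝ → M) : Prop :=
  ∃ r : ℝ, ∀ t : ℝ, 0 ≤ t → dist (γ t) (γ' t) ≤ r

section Helpers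

variable {M : Type*} [MetricSpace M] {γ' : ℝ → M}

lemma ray_dist (hγ' : IsGeodesicRay γ') {s t : ℝ} (hs : 0 ≤ s) (hst : s ≤ t) :
    dist (γ' s) (γ' t) = t - s := by
  rw [hγ' s t hs (hs.trans hst), abs_sub_comm, abs_of_nonneg (by linarith)]

lemma busemann_set_nonempty (γ' : ℝ → M) (p : M) :
    {x : ℝ | ∃ t : ℝ, 0 ≤ t ∧ x = t - dist p (γ' t)}.Nonempty :=
  ⟨0 - dist p (γ' 0), 0, le_refl 0, rfl⟩

lemma busemann_set_bddAbove (hγ' : IsGeodesicRay γ') (p : M) :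
    BddAbove {x : ℝ | ∃ t : ℝ, 0 ≤ t ∧ x = t - dist p (γ' t)} := by
  refine ⟨dist p (γ' 0), ?_⟩
  rintro x ⟨t, ht, rfl⟩
  have h1 : dist (γ' 0) (γ' t) = t - 0 := ray_dist hγ' le_rfl ht
  have h2 := dist_triangle (γ' 0) p (γ' t)
  have h3 : dist (γ' 0) p = dist p (γ' 0) := dist_comm _ _
  linarith

lemma le_busemann (hγ' : IsGeodesicRay γ') (p : M) {t : ℝ} (ht : 0 ≤ t) :
    t - dist p (γ' t) ≤ busemann γ' p :=
  le_csSup (busemann_set_bddAbove hγ' p) ⟨t, ht, rfl⟩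

lemma busemann_le_add (hγ' : IsGeodesicRay γ') (p : M) {t : ℝ} (ht : 0 ≤ t) :
    busemann γ' p ≤ t + dist p (γ' t) := by
  refine csSup_le (busemann_set_nonempty γ' p) ?_
  rintro x ⟨s, hs, rfl⟩
  have h1 : dist (γ' s) (γ' t) = |s - t| := hγ' s t hs ht
  have h2 := dist_triangle (γ' s) p (γ' t)
  have h3 : dist (γ' s) p = dist p (γ' s) := dist_comm _ _
  have h4 := le_abs_self (s - t)
  linarith

lemma busemann_le_dist (hγ' : IsGeodesicRay γ') (p : M) :
    busemann γ' p ≤ dist p (γ' 0) := by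
  refine csSup_le (busemann_set_nonempty γ' p) ?_
  rintro x ⟨t, ht, rfl⟩
  have h1 : dist (γ' 0) (γ' t) = t - 0 := ray_dist hγ' le_rfl ht
  have h2 := dist_triangle (γ' 0) p (γ' t)
  have h3 : dist (γ' 0) p = dist p (γ' 0) := dist_comm _ _
  linarith

lemma neg_dist_le_busemann (hγ' : IsGeodesicRay γ') (p : M) :
    -dist p (γ' 0) ≤ busemann γ' p := by
  have := le_busemann hγ' p (le_refl (0:ℝ))
  linarith

lemma busemann_mono (hγ' : IsGeodesicRay γ') (p : M) {s t : ℝ} (hs : 0 ≤ s) (hst : s ≤ t) :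
    s - dist p (γ' s) ≤ t - dist p (γ' t) := by
  have h1 : dist (γ' s) (γ' t) = t - s := ray_dist hγ' hs hst
  have h2 := dist_triangle p (γ' s) (γ' t)
  linarith

lemma exists_near_busemann (hγ' : IsGeodesicRay γ') (p : M) {δ : ℝ} (hδ : 0 < δ) :
    ∃ t : ℝ, 0 ≤ t ∧ busemann γ' p - δ < t - dist p (γ' t) := by
  have h : busemann γ' p - δ < sSup {x : ℝ | ∃ t : ℝ, 0 ≤ t ∧ x = t - dist p (γ' t)} := by
    change busemann γ' p - δ < busemann γ' p
    linarith
  obtain ⟨x, hx, hlt⟩ := exists_lt_of_lt_csSup (busemann_set_nonempty γ' p) h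
  obtain ⟨t, ht, rfl⟩ := hx
  exact ⟨t, ht, hlt⟩

/-- Key CAT(0) estimate. -/
lemma busemann_sq_key (hCN : CNInequality M) (hγ' : IsGeodesicRay γ') (p : M)
    {T : ℝ} (hT : 0 ≤ T) :
    dist p (γ' T) ^ 2 ≤ (T - busemann γ' p) ^ 2 + dist p (γ' 0) ^ 2 := by
  set β := busemann γ' p with hβdef
  have hβub : β ≤ dist p (γ' 0) := busemann_le_dist hγ' p
  have hβlb : -dist p (γ' 0) ≤ β := neg_dist_le_busemann hγ' p
  -- doubling inequality for f t = d(t)^2 - (t-β)^2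
  have hd : ∀ t : ℝ, 0 ≤ t →
      dist p (γ' t) ^ 2 - (t - β) ^ 2 ≤
        ((dist p (γ' 0) ^ 2 - β ^ 2) + (dist p (γ' (2*t)) ^ 2 - (2*t - β) ^ 2)) / 2 := by
    intro t ht
    have h1 : dist (γ' 0) (γ' t) = t - 0 := ray_dist hγ' le_rfl ht
    have h2 : dist (γ' 0) (γ' (2*t)) = 2*t - 0 := ray_dist hγ' le_rfl (by linarith)
    have h3 : dist (γ' t) (γ' (2*t)) = 2*t - t := ray_dist hγ' ht (by linarith)
    have hcn := hCN p (γ' 0) (γ' (2*t)) (γ' t)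
      (by rw [h1, h2]; ring) (by rw [h3, h2]; ring)
    rw [h2] at hcn
    nlinarith [hcn]
  -- iterate
  have hind : ∀ k : ℕ,
      (dist p (γ' 0) ^ 2 - β ^ 2) +
        2 ^ k * ((dist p (γ' T) ^ 2 - (T - β) ^ 2) - (dist p (γ' 0) ^ 2 - β ^ 2)) ≤
      dist p (γ' (2 ^ k * T)) ^ 2 - (2 ^ k * T - β) ^ 2 := by
    intro k
    induction k with
    | zero => norm_num
    | succ k ih =>
      have h := hd (2 ^ k * T) (by positivity)
      have h2 : (2:ℝ) ^ (k+1) * T = 2 * (2 ^ k * T) := by ring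
      rw [h2]
      have h3 : (2:ℝ) ^ (k+1) = 2 * 2 ^ k := by ring
      nlinarith [ih, h]
  -- suffices f T ≤ f 0
  have hmain : dist p (γ' T) ^ 2 - (T - β) ^ 2 ≤ dist p (γ' 0) ^ 2 - β ^ 2 := by
    by_contra hc
    push_neg at hc
    set c := (dist p (γ' T) ^ 2 - (T - β) ^ 2) - (dist p (γ' 0) ^ 2 - β ^ 2) with hcdef
    have hcpos : 0 < c := by simp only [hcdef]; linarith
    have hTpos : 0 < T := by
      rcases hT.lt_or_eq with h | h
      · exact h
      · exfalso; rw [← h] at hc; simp at hc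
    have hf0 : 0 ≤ dist p (γ' 0) ^ 2 - β ^ 2 := by nlinarith
    have hC : (0:ℝ) < 2 * T + 2 * dist p (γ' 0) := by
      have := dist_nonneg (x := p) (y := γ' 0); linarith
    have hεb : ∀ ε : ℝ, 0 < ε → c ≤ ε * (2 * T + 2 * dist p (γ' 0)) := by
      intro ε hε
      obtain ⟨t₀, ht₀, hx⟩ := exists_near_busemann hγ' p hε
      obtain ⟨k, hk⟩ := pow_unbounded_of_one_lt (t₀ / T) (by norm_num : (1:ℝ) < 2)
      have hs0 : (0:ℝ) ≤ 2 ^ k * T := by positivity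
      have hst : t₀ ≤ 2 ^ k * T := by
        rw [div_lt_iff₀ hTpos] at hk
        linarith
      set s := (2:ℝ) ^ k * T with hsdef
      have hmono := busemann_mono hγ' p ht₀ hst
      have hlbs := le_busemann hγ' p hs0
      have hubs := busemann_le_add hγ' p hs0
      have hds : dist p (γ' s) ≤ s + dist p (γ' 0) := by
        have h1 : dist (γ' 0) (γ' s) = s - 0 := ray_dist hγ' le_rfl hs0
        have h2 := dist_triangle p (γ' 0) (γ' s)
        linarith
      -- f s ≤ ε * (2 s + 2 d0)
      have key1 : dist p (γ' s) ^ 2 - (s - β) ^ 2 ≤ ε * (2 * s + 2 * dist p (γ' 0)) := by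
        have e1 : 0 ≤ dist p (γ' s) - (s - β) := by linarith
        have e2 : dist p (γ' s) - (s - β) ≤ ε := by linarith
        have e3 : 0 ≤ dist p (γ' s) + (s - β) := by linarith
        have e4 : dist p (γ' s) + (s - β) ≤ 2 * s + 2 * dist p (γ' 0) := by linarith
        nlinarith [mul_le_mul e2 e4 e3 hε.le]
      have key2 := hind k
      have h2k : (1:ℝ) ≤ 2 ^ k := one_le_pow₀ (by norm_num)
      have hd0 : (0:ℝ) ≤ dist p (γ' 0) := dist_nonneg
      -- 2^k * c ≤ ε * (2 * 2^k * T + 2 d0) ≤ 2^k * (ε * (2T + 2d0))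
      nlinarith [key1, key2, mul_le_mul_of_nonneg_left h2k (mul_nonneg hε.le hd0),
        mul_pos (show (0:ℝ) < 2^k by positivity) hcpos]
    have hne : (2 * T + 2 * dist p (γ' 0)) ≠ 0 := ne_of_gt hC
    have := hεb (c / (2 * (2 * T + 2 * dist p (γ' 0)))) (by positivity)
    rw [div_mul_eq_mul_div, mul_comm] at this
    have heq : (2 * T + 2 * dist p (γ' 0)) * c / (2 * (2 * T + 2 * dist p (γ' 0))) = c / 2 := by
      field_simp
    rw [heq] at this
    linarith
  nlinarith [hmain, sq_nonneg β]

end Helpers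

/-- joint sequential continuity of the Busemann function in the
ray (uniform convergence on compacta) and the point. -/
theorem busemann_jointly_continuous {M : Type*} [MetricSpace M] [ProperSpace M]
    (hgeo : IsGeodesicSpace M) (hCN : CNInequality M)
    (γ : ℝ → M) (hγ : IsGeodesicRay γ)
    (γm : ℕ → ℝ → M) (hγm : ∀ m, IsGeodesicRay (γm m))
    (hconv : ∀ T : ℝ, 0 < T → ∀ δ : ℝ, 0 < δ → ∃ N : ℕ, ∀ m : ℕ, N ≤ m →
        ∀ t : ℝ, 0 ≤ t → t ≤ T → dist (γm m t) (γ t) ≤ δ)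
    (bm : ℕ → M) (b : M) (hbm : Tendsto bm atTop (nhds b)) :
    Tendsto (fun m => busemann (γm m) (bm m)) atTop (nhds (busemann γ b)) := by
  rw [Metric.tendsto_atTop]
  intro ε hε
  set β := busemann γ b with hβdef
  set R := dist b (γ 0) + 1 with hRdef
  have hd0 : (0:ℝ) ≤ dist b (γ 0) := dist_nonneg
  have hR1 : (1:ℝ) ≤ R := by linarith
  set T := R + 3 * R ^ 2 / ε with hTdef
  have hTR : T - R = 3 * R ^ 2 / ε := by linarith
  clear_value β R T
  have hTRpos : 0 < T - R := by
    rw [hTR]; exact div_pos (by nlinarith) hε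
  have hT0 : (0:ℝ) < T := by linarith
  -- time realizing the sup up to ε/2
  obtain ⟨s₀, hs₀, hx⟩ := exists_near_busemann hγ b (show (0:ℝ) < ε/2 by linarith)
  -- the four largeness conditions
  obtain ⟨N1, hN1⟩ := (Metric.tendsto_atTop.mp hbm) (min (1/2) (ε/6)) (by positivity)
  obtain ⟨N2, hN2⟩ := hconv 1 one_pos (1/2) (by norm_num)
  obtain ⟨N3, hN3⟩ := hconv T hT0 (ε/6) (by positivity)
  obtain ⟨N4, hN4⟩ := hconv (s₀ + 1) (by linarith) (ε/6) (by positivity)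
  refine ⟨max (max N1 N2) (max N3 N4), fun m hm => ?_⟩
  have hm1 : N1 ≤ m := le_trans (le_trans (le_max_left _ _) (le_max_left _ _)) hm
  have hm2 : N2 ≤ m := le_trans (le_trans (le_max_right _ _) (le_max_left _ _)) hm
  have hm3 : N3 ≤ m := le_trans (le_trans (le_max_left _ _) (le_max_right _ _)) hm
  have hm4 : N4 ≤ m := le_trans (le_trans (le_max_right _ _) (le_max_right _ _)) hm
  have hb' := hN1 m hm1
  rw [lt_min_iff] at hb'
  have hb1 : dist (bm m) b ≤ 1/2 := hb'.1.le
  have hb2 : dist (bm m) b ≤ ε/6 := hb'.2.le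
  have h0 : dist (γm m 0) (γ 0) ≤ 1/2 := hN2 m hm2 0 le_rfl zero_le_one
  have hTm : dist (γm m T) (γ T) ≤ ε/6 := hN3 m hm3 T hT0.le le_rfl
  have hsm : dist (γm m s₀) (γ s₀) ≤ ε/6 := hN4 m hm4 s₀ hs₀ (by linarith)
  set βm := busemann (γm m) (bm m) with hβmdef
  clear_value βm
  -- distance from bm m to start of γm m
  have hRm : dist (bm m) (γm m 0) ≤ R := by
    have := dist_triangle4 (bm m) b (γ 0) (γm m 0)
    have h1 : dist (γ 0) (γm m 0) = dist (γm m 0) (γ 0) := dist_comm _ _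
    linarith
  -- Upper bound:  βm ≤ β + ε/2
  have hupper : βm ≤ β + ε/2 := by
    have hkey := busemann_sq_key hCN (hγm m) (bm m) hT0.le
    rw [← hβmdef] at hkey
    have hβmR : βm ≤ R := by rw [hβmdef]; exact le_trans (busemann_le_dist (hγm m) (bm m)) hRm
    have hD : T - βm ≤ dist (bm m) (γm m T) := by
      have := le_busemann (hγm m) (bm m) hT0.le
      linarith
    have e1 : dist (bm m) (γm m 0) ^ 2 ≤ R ^ 2 := by
      nlinarith [dist_nonneg (x := bm m) (y := γm m 0)]
    have e2 : dist (bm m) (γm m T) ^ 2 ≤ (T - βm) ^ 2 + R ^ 2 := by linarith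
    -- conclude dist (bm m) (γm m T) ≤ T - βm + ε/6
    have hRe : 3 * R ^ 2 / ε * ε = 3 * R ^ 2 := div_mul_cancel₀ _ (ne_of_gt hε)
    have h3 : 3 * R ^ 2 / ε ≤ T - βm := by linarith
    have hstep : dist (bm m) (γm m T) ≤ T - βm + ε/6 := by
      by_contra hcon
      push_neg at hcon
      have hprod : R ^ 2 ≤ ε/3 * (T - βm) := by
        have heq : ε/3 * (3 * R ^ 2 / ε) = R ^ 2 := by
          field_simp
        have := mul_le_mul_of_nonneg_left h3 (show (0:ℝ) ≤ ε/3 by linarith)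
        linarith
      have hpos : 0 ≤ T - βm + ε/6 := by linarith
      have hsq := pow_lt_pow_left₀ hcon hpos two_ne_zero
      have hexp : (T - βm + ε/6) ^ 2 = (T - βm) ^ 2 + ε/3 * (T - βm) + ε ^ 2 / 36 := by
        ring
      linarith [hsq, e2, hprod, hexp, mul_pos hε hε]
    -- compare with γ at time T
    have htr := dist_triangle4 b (bm m) (γm m T) (γ T)
    have hc1 : dist b (bm m) = dist (bm m) b := dist_comm _ _
    have hc2 : dist (γm m T) (γ T) = dist (γ T) (γm m T) := dist_comm _ _
    have hβT : T - dist b (γ T) ≤ β := by rw [hβdef]; exact le_busemann hγ b hT0.le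
    -- dist b (γ T) ≤ dist (bm m) (γm m T) + ε/6 + ε/6
    have : T - dist (bm m) (γm m T) ≤ T - dist b (γ T) + ε/6 + ε/6 := by linarith
    linarith
  -- Lower bound: βm > β - ε
  have hlower : β - ε < βm := by
    have h1 : s₀ - dist (bm m) (γm m s₀) ≤ βm := by rw [hβmdef]; exact le_busemann (hγm m) (bm m) hs₀
    have htr := dist_triangle4 (bm m) b (γ s₀) (γm m s₀)
    have hc1 : dist (γ s₀) (γm m s₀) = dist (γm m s₀) (γ s₀) := dist_comm _ _
    linarith
  rw [Real.dist_eq, abs_lt]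
  constructor <;> linarith
end

section
/- Let M be a proper geodesic metric space satisfying the CN inequality (i.e., a proper CAT(0) space). Let 0 < ν ≤ 1, μ ≥ 1, r > 0, let S > r(1 + 2r/ν), and set R := μS/ν. Let a, c ∈ M with d(a, c) ≥ R, and let γ be a geodesic ray with γ(0) = c such that d(a, γ(T)) ≤ μ for some T ≥ 0. Then for every q ∈ M with d(c, q) ≤ r one has |β_γ(q) − (d(a, c) − d(a, q))| ≤ 6ν; that is, the shift toward the end of γ differs from the shift toward the point a by at most 6ν on the ball of radius r around c. -/
open Metric Filter Set

set_option maxHeartbeats 1000000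

section BusemannAux

variable {M : Type*} [MetricSpace M]

private lemma le_of_sq_le_sq' {d e : ℝ} (hd : 0 ≤ d) (he : 0 ≤ e) (h : d ^ 2 ≤ e ^ 2) :
    d ≤ e := by
  have h1 := Real.sqrt_le_sqrt h
  rwa [Real.sqrt_sq hd, Real.sqrt_sq he] at h1

private lemma one_le_two_pow' (n : ℕ) : (1 : ℝ) ≤ 2 ^ n := by
  induction n with
  | zero => norm_num
  | succ k ih => rw [pow_succ]; nlinarith

private lemma bus_bdd {γ : ℝ → M} (hγ : IsGeodesicRay γ) (b : M) :
    BddAbove {x : ℝ | ∃ t : ℝ, 0 ≤ t ∧ x = t - dist b (γ t)} := by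
  refine ⟨dist b (γ 0), ?_⟩
  rintro x ⟨t, ht, rfl⟩
  have h2 : dist (γ 0) (γ t) = t := by
    rw [hγ 0 t le_rfl ht]; simp [abs_of_nonneg ht]
  have h3 := dist_triangle (γ 0) b (γ t)
  rw [dist_comm (γ 0) b] at h3
  linarith [h2 ▸ h3]

private lemma bus_ne (γ : ℝ → M) (b : M) :
    Set.Nonempty {x : ℝ | ∃ t : ℝ, 0 ≤ t ∧ x = t - dist b (γ t)} :=
  ⟨0 - dist b (γ 0), 0, le_rfl, rfl⟩

private lemma le_bus {γ : ℝ → M} (hγ : IsGeodesicRay γ) (b : M) {t : ℝ} (ht : 0 ≤ t) :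
    t - dist b (γ t) ≤ busemann γ b :=
  le_csSup (bus_bdd hγ b) ⟨t, ht, rfl⟩

private lemma bus_le {γ : ℝ → M} (hγ : IsGeodesicRay γ) (b : M) :
    busemann γ b ≤ dist b (γ 0) := by
  refine csSup_le (bus_ne γ b) ?_
  rintro x ⟨t, ht, rfl⟩
  have h2 : dist (γ 0) (γ t) = t := by
    rw [hγ 0 t le_rfl ht]; simp [abs_of_nonneg ht]
  have h3 := dist_triangle (γ 0) b (γ t)
  rw [dist_comm (γ 0) b] at h3
  linarith [h2 ▸ h3]

private lemma neg_le_bus {γ : ℝ → M} (hγ : IsGeodesicRay γ) (b : M) :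
    -dist b (γ 0) ≤ busemann γ b := by
  have := le_bus hγ b le_rfl
  linarith

/-- midpoint halving for two geodesics from a common point -/
private lemma halv (hCN : CNInequality M) {τ τ' : ℝ → M} {L L' : ℝ} (hL : 0 ≤ L) (hL' : 0 ≤ L')
    (hτ : ∀ s t : ℝ, s ∈ Set.Icc 0 L → t ∈ Set.Icc 0 L → dist (τ s) (τ t) = |s - t|)
    (hτ' : ∀ s t : ℝ, s ∈ Set.Icc 0 L' → t ∈ Set.Icc 0 L' → dist (τ' s) (τ' t) = |s - t|)
    (h0 : τ 0 = τ' 0) :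
    dist (τ (L / 2)) (τ' (L' / 2)) ≤ dist (τ L) (τ' L') / 2 := by
  have m0 : (0:ℝ) ∈ Set.Icc 0 L := ⟨le_rfl, hL⟩
  have mh : L / 2 ∈ Set.Icc 0 L := ⟨by linarith, by linarith⟩
  have mL : L ∈ Set.Icc 0 L := ⟨hL, le_rfl⟩
  have m0' : (0:ℝ) ∈ Set.Icc 0 L' := ⟨le_rfl, hL'⟩
  have mh' : L' / 2 ∈ Set.Icc 0 L' := ⟨by linarith, by linarith⟩
  have mL' : L' ∈ Set.Icc 0 L' := ⟨hL', le_rfl⟩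
  have e1 : dist (τ 0) (τ (L/2)) = L / 2 := by
    rw [hτ 0 (L/2) m0 mh]; rw [abs_of_nonpos (by linarith)]; ring
  have e2 : dist (τ 0) (τ L) = L := by
    rw [hτ 0 L m0 mL]; rw [abs_of_nonpos (by linarith)]; ring
  have e3 : dist (τ (L/2)) (τ L) = L / 2 := by
    rw [hτ (L/2) L mh mL]; rw [abs_of_nonpos (by linarith)]; ring
  have e1' : dist (τ' 0) (τ' (L'/2)) = L' / 2 := by
    rw [hτ' 0 (L'/2) m0' mh']; rw [abs_of_nonpos (by linarith)]; ring
  have e2' : dist (τ' 0) (τ' L') = L' := by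
    rw [hτ' 0 L' m0' mL']; rw [abs_of_nonpos (by linarith)]; ring
  have e3' : dist (τ' (L'/2)) (τ' L') = L' / 2 := by
    rw [hτ' (L'/2) L' mh' mL']; rw [abs_of_nonpos (by linarith)]; ring
  have c1 : dist (τ' L') (τ (L/2)) ^ 2 ≤
      dist (τ' L') (τ 0) ^ 2 / 2 + dist (τ' L') (τ L) ^ 2 / 2 - dist (τ 0) (τ L) ^ 2 / 4 := by
    refine hCN (τ' L') (τ 0) (τ L) (τ (L/2)) ?_ ?_
    · rw [e1, e2]
    · rw [e3, e2]
  have c2 : dist (τ (L/2)) (τ' (L'/2)) ^ 2 ≤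
      dist (τ (L/2)) (τ' 0) ^ 2 / 2 + dist (τ (L/2)) (τ' L') ^ 2 / 2
        - dist (τ' 0) (τ' L') ^ 2 / 4 := by
    refine hCN (τ (L/2)) (τ' 0) (τ' L') (τ' (L'/2)) ?_ ?_
    · rw [e1', e2']
    · rw [e3', e2']
  have r1 : dist (τ' L') (τ 0) = L' := by rw [h0, dist_comm]; exact e2'
  have r2 : dist (τ (L/2)) (τ' 0) = L / 2 := by rw [← h0, dist_comm]; exact e1
  rw [r1, e2] at c1
  rw [r2, e2'] at c2
  rw [dist_comm (τ' L') (τ L)] at c1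
  rw [dist_comm (τ (L/2)) (τ' L')] at c2
  have key : dist (τ (L/2)) (τ' (L'/2)) ^ 2 ≤ (dist (τ L) (τ' L') / 2) ^ 2 := by
    nlinarith [c1, c2]
  exact le_of_sq_le_sq' dist_nonneg (by positivity) key

private lemma halv_pow (hCN : CNInequality M) (n : ℕ) :
    ∀ {τ τ' : ℝ → M} {L L' : ℝ}, 0 ≤ L → 0 ≤ L' →
    (∀ s t : ℝ, s ∈ Set.Icc 0 L → t ∈ Set.Icc 0 L → dist (τ s) (τ t) = |s - t|) →
    (∀ s t : ℝ, s ∈ Set.Icc 0 L' → t ∈ Set.Icc 0 L' → dist (τ' s) (τ' t) = |s - t|) →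
    τ 0 = τ' 0 →
    dist (τ (L / 2 ^ n)) (τ' (L' / 2 ^ n)) ≤ dist (τ L) (τ' L') / 2 ^ n := by
  induction n with
  | zero => intro τ τ' L L' _ _ _ _ _; simp
  | succ n ih =>
    intro τ τ' L L' hL hL' hτ hτ' h0
    have hτ2 : ∀ s t : ℝ, s ∈ Set.Icc 0 (L/2) → t ∈ Set.Icc 0 (L/2) →
        dist (τ s) (τ t) = |s - t| := fun s t hs ht =>
      hτ s t ⟨hs.1, by linarith [hs.2]⟩ ⟨ht.1, by linarith [ht.2]⟩
    have hτ'2 : ∀ s t : ℝ, s ∈ Set.Icc 0 (L'/2) → t ∈ Set.Icc 0 (L'/2) →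
        dist (τ' s) (τ' t) = |s - t| := fun s t hs ht =>
      hτ' s t ⟨hs.1, by linarith [hs.2]⟩ ⟨ht.1, by linarith [ht.2]⟩
    have h1 := halv hCN hL hL' hτ hτ' h0
    have h2 := ih (by linarith : (0:ℝ) ≤ L/2) (by linarith : (0:ℝ) ≤ L'/2) hτ2 hτ'2 h0
    have eL : L / 2 / 2 ^ n = L / 2 ^ (n + 1) := by rw [pow_succ]; ring
    have eL' : L' / 2 / 2 ^ n = L' / 2 ^ (n + 1) := by rw [pow_succ]; ring
    rw [eL, eL'] at h2
    have h3 : dist (τ (L/2)) (τ' (L'/2)) / 2 ^ n ≤ dist (τ L) (τ' L') / 2 / 2 ^ n := by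
      gcongr
    calc dist (τ (L / 2 ^ (n+1))) (τ' (L' / 2 ^ (n+1)))
        ≤ dist (τ (L/2)) (τ' (L'/2)) / 2 ^ n := h2
      _ ≤ dist (τ L) (τ' L') / 2 / 2 ^ n := h3
      _ = dist (τ L) (τ' L') / 2 ^ (n+1) := by rw [pow_succ]; ring

/-- Lemma A: dyadic CN iteration along a geodesic segment. -/
private lemma lemA (hCN : CNInequality M) {τ : ℝ → M} {L : ℝ} (hL : 0 ≤ L)
    (hτ : ∀ s t : ℝ, s ∈ Set.Icc 0 L → t ∈ Set.Icc 0 L → dist (τ s) (τ t) = |s - t|)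
    (x : M) (b : ℝ) (hbase : dist x (τ L) ≤ L + b) (hb : |b| ≤ dist x (τ 0)) :
    ∀ n : ℕ, dist x (τ (L / 2 ^ n)) ^ 2 ≤ (L / 2 ^ n + b) ^ 2 + (dist x (τ 0) ^ 2 - b ^ 2) := by
  have hbsq : b ^ 2 ≤ dist x (τ 0) ^ 2 := by
    nlinarith [abs_nonneg b, hb, sq_abs b]
  intro n
  induction n with
  | zero =>
    have h0 : 0 ≤ L + b := le_trans dist_nonneg hbase
    have h1 : dist x (τ L) ^ 2 ≤ (L + b) ^ 2 := by
      nlinarith [dist_nonneg (x := x) (y := τ L)]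
    simpa using by linarith
  | succ n ih =>
    have hp1 : (1:ℝ) ≤ 2 ^ n := one_le_two_pow' n
    have hp2 : (1:ℝ) ≤ 2 ^ (n+1) := one_le_two_pow' (n+1)
    set u := L / 2 ^ (n + 1) with hu
    have hu0 : 0 ≤ u := by positivity
    have huL : u ≤ L := div_le_self hL hp2
    have h2u : L / 2 ^ n = 2 * u := by rw [hu, pow_succ]; field_simp
    have h2u0 : 0 ≤ 2 * u := by linarith
    have h2uL : 2 * u ≤ L := h2u ▸ div_le_self hL hp1
    have m0 : (0:ℝ) ∈ Set.Icc 0 L := ⟨le_rfl, hL⟩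
    have mu : u ∈ Set.Icc 0 L := ⟨hu0, huL⟩
    have m2u : 2 * u ∈ Set.Icc 0 L := ⟨h2u0, h2uL⟩
    have e1 : dist (τ 0) (τ u) = u := by
      rw [hτ 0 u m0 mu]; rw [abs_of_nonpos (by linarith)]; ring
    have e2 : dist (τ 0) (τ (2*u)) = 2 * u := by
      rw [hτ 0 (2*u) m0 m2u]; rw [abs_of_nonpos (by linarith)]; ring
    have e3 : dist (τ u) (τ (2*u)) = u := by
      rw [hτ u (2*u) mu m2u]; rw [abs_of_nonpos (by linarith)]; ring
    have key : dist x (τ u) ^ 2 ≤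
        dist x (τ 0) ^ 2 / 2 + dist x (τ (2*u)) ^ 2 / 2 - dist (τ 0) (τ (2*u)) ^ 2 / 4 := by
      refine hCN x (τ 0) (τ (2*u)) (τ u) ?_ ?_
      · rw [e1, e2]; ring
      · rw [e3, e2]; ring
    rw [e2] at key
    rw [h2u] at ih
    nlinarith [key, ih]

/-- Lemma B: the Busemann quantitative distance bound along the ray. -/
private lemma lemB (hCN : CNInequality M) {γ : ℝ → M} (hγ : IsGeodesicRay γ) (q : M)
    {t₀ : ℝ} (ht₀ : 0 ≤ t₀) :
    dist q (γ t₀) ^ 2 ≤ (t₀ - busemann γ q) ^ 2 + (dist q (γ 0) ^ 2 - busemann γ q ^ 2) := by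
  set β := busemann γ q with hβ
  rcases eq_or_lt_of_le ht₀ with h | h
  · have e : (0 - β) ^ 2 + (dist q (γ 0) ^ 2 - β ^ 2) = dist q (γ 0) ^ 2 := by ring
    rw [← h, e]
  · refine le_of_forall_pos_le_add ?_
    intro ε hε
    have hεt : 0 < ε / (2 * t₀) := by positivity
    obtain ⟨x, hxmem, hxlt⟩ := exists_lt_of_lt_csSup (bus_ne γ q)
      (show β - ε / (2 * t₀) < β by linarith)
    obtain ⟨t₁, ht₁, rfl⟩ := hxmem
    obtain ⟨m, hm⟩ := pow_unbounded_of_one_lt (t₁ / t₀) (by norm_num : (1:ℝ) < 2)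
    set T₂ := 2 ^ m * t₀ with hT₂
    have hT₂0 : 0 < T₂ := by positivity
    have ht₁T₂ : t₁ ≤ T₂ := le_of_lt ((div_lt_iff₀ h).mp hm)
    have hd12 : dist (γ t₁) (γ T₂) = T₂ - t₁ := by
      rw [hγ t₁ T₂ ht₁ hT₂0.le]; rw [abs_of_nonpos (by linarith)]; ring
    have hmono : dist q (γ T₂) ≤ dist q (γ t₁) + (T₂ - t₁) := by
      have := dist_triangle q (γ t₁) (γ T₂)
      linarith [hd12 ▸ this]
    set g := T₂ - dist q (γ T₂) with hg
    have hg1 : β - ε / (2 * t₀) < g := by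
      have : t₁ - dist q (γ t₁) ≤ g := by simp only [hg]; linarith
      linarith
    have hg2 : g ≤ β := le_csSup (bus_bdd hγ q) ⟨T₂, hT₂0.le, rfl⟩
    have hiso : ∀ s t : ℝ, s ∈ Set.Icc 0 T₂ → t ∈ Set.Icc 0 T₂ →
        dist (γ s) (γ t) = |s - t| := fun s t hs ht => hγ s t hs.1 ht.1
    have hbase : dist q (γ T₂) ≤ T₂ + -g := by simp only [hg]; ring_nf; rfl
    have hb : |(-g)| ≤ dist q (γ 0) := by
      have h1 : dist (γ 0) (γ T₂) = T₂ := by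
        rw [hγ 0 T₂ le_rfl hT₂0.le]; simp [abs_of_nonneg hT₂0.le]
      have h2 := dist_triangle (γ 0) q (γ T₂)
      have h3 := dist_triangle q (γ 0) (γ T₂)
      rw [h1] at h2
      rw [dist_comm (γ 0) q] at h2
      rw [abs_le]
      constructor
      · simp only [hg]; linarith [h1 ▸ h3]
      · simp only [hg]; linarith
    have hA := lemA hCN hT₂0.le hiso q (-g) hbase hb m
    have hT₂m : T₂ / 2 ^ m = t₀ := by rw [hT₂]; field_simp
    rw [hT₂m] at hA
    have hdiv : 2 * t₀ * (ε / (2 * t₀)) = ε := by field_simp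
    have key : 2 * t₀ * (β - g) < ε := by
      have h5 : β - g < ε / (2 * t₀) := by linarith
      calc 2 * t₀ * (β - g) < 2 * t₀ * (ε / (2 * t₀)) :=
            mul_lt_mul_of_pos_left h5 (by linarith)
        _ = ε := hdiv
    nlinarith [hA, key]


private lemma arith_S {ν r S : ℝ} (hν0 : 0 < ν) (hν3 : 3 * ν < r)
    (hνS : ν * r + 2 * r ^ 2 < ν * S) : 0 < S ∧ 7 * r < S := by
  have hr0 : 0 < r := by linarith
  constructor
  · nlinarith [mul_pos hr0 hr0, mul_pos hν0 hr0]
  · nlinarith [mul_pos hν0 hr0, mul_pos (sub_pos.mpr hν3) hr0]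

private lemma arith_SR {ν μ S : ℝ} (hν0 : 0 < ν) (hν1 : ν ≤ 1) (hμ : 1 ≤ μ)
    (hS : 0 < S) : S ≤ μ * S / ν := by
  rw [le_div_iff₀ hν0]; nlinarith

private lemma arith_halfdiv {x S p : ℝ} (hp : 0 < p) (hk : S * p < x) :
    S / 2 < x / (2 * p) := by
  rw [div_lt_div_iff₀ (by norm_num) (by positivity)]
  nlinarith

private lemma arith_sub_sq {d b r : ℝ} (h0 : 0 ≤ d) (h1 : d ≤ r) :
    d ^ 2 - b ^ 2 ≤ r ^ 2 := by nlinarith [sq_nonneg b]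

private lemma arith_nu1 {ν r S x : ℝ} (hν0 : 0 < ν) (hν3 : 3 * ν < r)
    (hνS : ν * r + 2 * r ^ 2 < ν * S) (hx : S / 2 - ν - r ≤ x) :
    r ^ 2 ≤ 2 * ν * x := by
  have hr0 : 0 < r := by linarith
  have h1 : 0 ≤ ν * (x - (S / 2 - ν - r)) := mul_nonneg hν0.le (by linarith)
  nlinarith [mul_pos (show 0 < r - 2 * ν by linarith) (show 0 < r + ν by linarith)]

private lemma arith_nu2 {ν r S y : ℝ} (hν0 : 0 < ν) (hν3 : 3 * ν < r)
    (hνS : ν * r + 2 * r ^ 2 < ν * S) (hy : S / 2 - ν - 2 * r ≤ y) :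
    r ^ 2 ≤ 2 * ((3/2) * ν) * y := by
  have hr0 : 0 < r := by linarith
  have h1 : 0 ≤ ν * (y - (S / 2 - ν - 2 * r)) := mul_nonneg hν0.le (by linarith)
  nlinarith [sq_nonneg (r - 3 * ν), mul_pos (sub_pos.mpr hν3) hν0, mul_pos hν0 hν0]

private lemma dist_le_lin {d x K r w : ℝ} (hd : 0 ≤ d) (hw : 0 < w)
    (hsq : d ^ 2 ≤ x ^ 2 + K) (hK : K ≤ r ^ 2) (hrx : r ^ 2 ≤ 2 * w * x)
    (hr0 : 0 ≤ r) : d ≤ x + w := by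
  have hx : 0 ≤ x := by nlinarith
  have h2 : d ^ 2 ≤ (x + w) ^ 2 := by nlinarith
  exact le_of_sq_le_sq' hd (by linarith) h2

end BusemannAux

/-- the shift towards the end of a ray nearly passing through
`a` differs from the shift towards the point `a` by at most `6ν` on `B_r(c)`. -/
theorem busemann_compare_point_shift {M : Type*} [MetricSpace M] [ProperSpace M]
    (hgeo : IsGeodesicSpace M) (hCN : CNInequality M)
    (ν μ r S R : ℝ) (hν0 : 0 < ν) (hν1 : ν ≤ 1) (hμ : 1 ≤ μ) (hr : 0 < r)
    (hS : r * (1 + 2 * r / ν) < S) (hR : R = μ * S / ν)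
    (a c : M) (hac : R ≤ dist a c)
    (γ : ℝ → M) (hγ : IsGeodesicRay γ) (hγ0 : γ 0 = c)
    (T : ℝ) (hT : 0 ≤ T) (hTμ : dist a (γ T) ≤ μ) :
    ∀ q : M, dist c q ≤ r →
      |busemann γ q - (dist a c - dist a q)| ≤ 6 * ν := by
  intro q hq
  classical
  have hβ_le : busemann γ q ≤ dist q c := by
    have h := bus_le hγ q; rwa [hγ0] at h
  have hβ_ge : -dist q c ≤ busemann γ q := by
    have h := neg_le_bus hγ q; rwa [hγ0] at h
  have hqc : dist q c ≤ r := by rw [dist_comm]; exact hq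
  have hDA : |dist a c - dist a q| ≤ dist q c := by
    have h := abs_dist_sub_le c q a
    rwa [dist_comm c a, dist_comm q a, dist_comm c q] at h
  by_cases hcase : r ≤ 3 * ν
  · -- trivial case: everything is within 2r ≤ 6ν
    have h1 : |busemann γ q| ≤ r := abs_le.mpr ⟨by linarith, by linarith⟩
    have h2 : |busemann γ q - (dist a c - dist a q)| ≤
        |busemann γ q| + |dist a c - dist a q| := by
      calc |busemann γ q - (dist a c - dist a q)|
          = |busemann γ q + -(dist a c - dist a q)| := by ring_nf
        _ ≤ |busemann γ q| + |-(dist a c - dist a q)| := abs_add_le _ _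
        _ = |busemann γ q| + |dist a c - dist a q| := by rw [abs_neg]
    linarith [hDA, hqc]
  · push_neg at hcase
    have hν3 : 3 * ν < r := hcase
    have hνS : ν * r + 2 * r ^ 2 < ν * S := by
      have h := mul_lt_mul_of_pos_left hS hν0
      have e : ν * (r * (1 + 2 * r / ν)) = ν * r + 2 * r ^ 2 := by field_simp
      linarith [e ▸ h]
    have hSpos : 0 < S := (arith_S hν0 hν3 hνS).1
    have hS7 : 7 * r < S := (arith_S hν0 hν3 hνS).2
    have hRpos : 0 < R := by rw [hR]; positivity
    have hSR : S ≤ R := by rw [hR]; exact arith_SR hν0 hν1 hμ hSpos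
    have hDpos : 0 < dist a c := lt_of_lt_of_le hRpos hac
    have hcT : dist c (γ T) = T := by
      rw [← hγ0, hγ 0 T le_rfl hT]; simp [abs_of_nonneg hT]
    have hTub : T ≤ dist a c + μ := by
      have h := dist_triangle c a (γ T)
      rw [hcT, dist_comm c a] at h
      linarith
    have hTlb : dist a c - μ ≤ T := by
      have h := dist_triangle a (γ T) c
      rw [dist_comm (γ T) c, hcT] at h
      linarith
    -- choice of dyadic scale n₀
    have hex : ∃ n : ℕ, dist a c ≤ S * 2 ^ n := by
      obtain ⟨m, hm⟩ := pow_unbounded_of_one_lt (dist a c / S) (by norm_num : (1:ℝ) < 2)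
      exact ⟨m, le_of_lt (by rwa [div_lt_iff₀ hSpos, mul_comm] at hm)⟩
    obtain ⟨n₀, hfind, hmin⟩ : ∃ n : ℕ, dist a c ≤ S * 2 ^ n ∧
        ∀ k, k < n → S * 2 ^ k < dist a c := by
      refine ⟨Nat.find hex, Nat.find_spec hex, fun k hk => ?_⟩
      have h := Nat.find_min hex hk
      push_neg at h
      exact h
    have hp0 : (0:ℝ) < 2 ^ n₀ := by positivity
    have hp1 : (1:ℝ) ≤ 2 ^ n₀ := one_le_two_pow' n₀
    have hlam2 : S / 2 < dist a c / 2 ^ n₀ := by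
      rcases Nat.eq_zero_or_pos n₀ with h0 | h0
      · rw [h0]; simp; linarith [le_trans hSR hac]
      · have hk : S * 2 ^ (n₀ - 1) < dist a c := hmin (n₀ - 1) (by omega)
        have e : (2:ℝ) ^ n₀ = 2 * 2 ^ (n₀ - 1) := by
          rw [← pow_succ']
          congr 1
          omega
        rw [e]
        exact arith_halfdiv (by positivity) hk
    have hmul : μ / 2 ^ n₀ ≤ ν := by
      have h1 : μ * S / ν ≤ S * 2 ^ n₀ := by rw [← hR]; linarith
      have h2 : μ * S ≤ ν * 2 ^ n₀ * S := by
        calc μ * S = (μ * S / ν) * ν := by field_simp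
          _ ≤ (S * 2 ^ n₀) * ν := mul_le_mul_of_nonneg_right h1 hν0.le
          _ = ν * 2 ^ n₀ * S := by ring
      have h3 : μ ≤ ν * 2 ^ n₀ := le_of_mul_le_mul_right (by linarith) hSpos
      rw [div_le_iff₀ hp0]; linarith
    -- geodesics
    obtain ⟨σ, hσ0, hσL, hσiso⟩ := hgeo c a
    obtain ⟨τ, hτ0, hτL, hτiso⟩ := hgeo q a
    obtain ⟨τ', hτ'0, hτ'L, hτ'iso⟩ := hgeo q (γ T)
    have hDca : dist c a = dist a c := dist_comm c a
    have hAq : dist q a = dist a q := dist_comm q a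
    have hA'T : T - dist q (γ T) ≤ busemann γ q := le_bus hγ q hT
    have hA'ge : T - dist q c ≤ dist q (γ T) := by
      have h := dist_triangle c q (γ T)
      rw [hcT, dist_comm c q] at h
      linarith
    have hA'Aq : |dist q (γ T) - dist q a| ≤ μ := by
      have h := abs_dist_sub_le (γ T) a q
      rw [dist_comm (γ T) q, dist_comm a q, dist_comm (γ T) a] at h
      exact le_trans h hTμ
    -- ========== G1 : dist a q ≤ dist a c - β + 3ν ==========
    have ht₀0 : (0:ℝ) ≤ T / 2 ^ n₀ := by positivity
    have hB := lemB hCN hγ q ht₀0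
    rw [hγ0] at hB
    have ht₀lb : S / 2 - ν ≤ T / 2 ^ n₀ := by
      have h1 : (dist a c - μ) / 2 ^ n₀ ≤ T / 2 ^ n₀ := by gcongr
      have h2 : (dist a c - μ) / 2 ^ n₀ = dist a c / 2 ^ n₀ - μ / 2 ^ n₀ := by ring
      linarith [h2 ▸ h1]
    have hKr : dist q c ^ 2 - busemann γ q ^ 2 ≤ r ^ 2 :=
      arith_sub_sq dist_nonneg hqc
    have ht₀β : S / 2 - ν - r ≤ T / 2 ^ n₀ - busemann γ q := by linarith
    have h2νb : r ^ 2 ≤ 2 * ν * (T / 2 ^ n₀ - busemann γ q) :=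
      arith_nu1 hν0 hν3 hνS ht₀β
    have hqγt₀ : dist q (γ (T / 2 ^ n₀)) ≤ (T / 2 ^ n₀ - busemann γ q) + ν :=
      dist_le_lin dist_nonneg hν0 hB hKr h2νb hr.le
    have hγiso : ∀ s t : ℝ, s ∈ Set.Icc 0 T → t ∈ Set.Icc 0 T →
        dist (γ s) (γ t) = |s - t| := fun s t hs ht => hγ s t hs.1 ht.1
    have hγσ0 : γ 0 = σ 0 := by rw [hγ0, hσ0]
    have hca0 : (0:ℝ) ≤ dist c a := dist_nonneg
    have hcomp1 : dist (γ (T / 2 ^ n₀)) (σ (dist c a / 2 ^ n₀)) ≤ μ / 2 ^ n₀ := by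
      have h := halv_pow hCN n₀ hT hca0 hγiso hσiso hγσ0
      rw [hσL] at h
      have h2 : dist (γ T) a ≤ μ := by rw [dist_comm]; exact hTμ
      calc dist (γ (T / 2 ^ n₀)) (σ (dist c a / 2 ^ n₀)) ≤ dist (γ T) a / 2 ^ n₀ := h
        _ ≤ μ / 2 ^ n₀ := by gcongr
    have hσmem : dist c a / 2 ^ n₀ ∈ Set.Icc 0 (dist c a) :=
      ⟨by positivity, div_le_self hca0 hp1⟩
    have hσdist : dist (σ (dist c a / 2 ^ n₀)) a = dist c a - dist c a / 2 ^ n₀ := by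
      have h := hσiso (dist c a / 2 ^ n₀) (dist c a) hσmem ⟨hca0, le_rfl⟩
      rw [hσL] at h
      rw [h, abs_of_nonpos (by linarith [hσmem.2])]
      ring
    have htri1 := dist_triangle4 q (γ (T / 2 ^ n₀)) (σ (dist c a / 2 ^ n₀)) a
    have hshift1 : T / 2 ^ n₀ - dist c a / 2 ^ n₀ ≤ μ / 2 ^ n₀ := by
      have h1 : (T - dist c a) / 2 ^ n₀ ≤ μ / 2 ^ n₀ := by
        gcongr
        rw [hDca]; linarith
      have h2 : (T - dist c a) / 2 ^ n₀ = T / 2 ^ n₀ - dist c a / 2 ^ n₀ := by ring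
      linarith [h2 ▸ h1]
    have hG1 : dist a q ≤ dist a c - busemann γ q + 3 * ν := by
      have h := htri1
      rw [hσdist] at h
      have hq' : dist q a = dist a q := hAq
      linarith [hqγt₀, hcomp1, hmul, hshift1, hDca]
    -- ========== G2 : dist a c ≤ dist a q + β + (7/2)ν ==========
    have hA'0 : (0:ℝ) ≤ dist q (γ T) := dist_nonneg
    have hbase2 : dist c (τ' (dist q (γ T))) ≤ dist q (γ T) + busemann γ q := by
      rw [hτ'L, hcT]; linarith
    have hbabs2 : |busemann γ q| ≤ dist c (τ' 0) := by
      rw [hτ'0, dist_comm c q]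
      exact abs_le.mpr ⟨by linarith, hβ_le⟩
    have hLA := lemA hCN hA'0 hτ'iso c (busemann γ q) hbase2 hbabs2 n₀
    rw [hτ'0] at hLA
    have hKc : dist c q ^ 2 - busemann γ q ^ 2 ≤ r ^ 2 := by
      rw [dist_comm c q]; exact hKr
    have hr2 : r / 2 ^ n₀ ≤ r := div_le_self hr.le hp1
    have hu'lb : S / 2 - ν - r ≤ dist q (γ T) / 2 ^ n₀ := by
      have h1 : (dist a c - μ - r) / 2 ^ n₀ ≤ dist q (γ T) / 2 ^ n₀ := by
        gcongr
        linarith [hA'ge, hqc, hTlb]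
      have h2 : (dist a c - μ - r) / 2 ^ n₀
          = dist a c / 2 ^ n₀ - μ / 2 ^ n₀ - r / 2 ^ n₀ := by ring
      linarith [h2 ▸ h1, hr2]
    have hu'β : 0 < dist q (γ T) / 2 ^ n₀ + busemann γ q := by
      linarith [hu'lb, hβ_ge, hqc, hS7, hν3]
    have hub : S / 2 - ν - 2*r ≤ dist q (γ T) / 2 ^ n₀ + busemann γ q := by
      linarith [hu'lb, hβ_ge, hqc]
    have h3νb : r ^ 2 ≤ 2 * ((3/2) * ν) * (dist q (γ T) / 2 ^ n₀ + busemann γ q) :=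
      arith_nu2 hν0 hν3 hνS hub
    have hcx' : dist c (τ' (dist q (γ T) / 2 ^ n₀)) ≤
        dist q (γ T) / 2 ^ n₀ + busemann γ q + (3/2) * ν :=
      dist_le_lin dist_nonneg (by linarith) hLA hKc h3νb hr.le
    have hcomp2 : dist (τ' (dist q (γ T) / 2 ^ n₀)) (τ (dist q a / 2 ^ n₀)) ≤ μ / 2 ^ n₀ := by
      have h00 : τ' 0 = τ 0 := by rw [hτ'0, hτ0]
      have h := halv_pow hCN n₀ hA'0 (dist_nonneg : (0:ℝ) ≤ dist q a) hτ'iso hτiso h00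
      rw [hτ'L, hτL] at h
      have h2 : dist (γ T) a ≤ μ := by rw [dist_comm]; exact hTμ
      calc dist (τ' (dist q (γ T) / 2 ^ n₀)) (τ (dist q a / 2 ^ n₀))
          ≤ dist (γ T) a / 2 ^ n₀ := h
        _ ≤ μ / 2 ^ n₀ := by gcongr
    have hqa0 : (0:ℝ) ≤ dist q a := dist_nonneg
    have hτmem : dist q a / 2 ^ n₀ ∈ Set.Icc 0 (dist q a) :=
      ⟨by positivity, div_le_self hqa0 hp1⟩
    have hτdist : dist (τ (dist q a / 2 ^ n₀)) a = dist q a - dist q a / 2 ^ n₀ := by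
      have h := hτiso (dist q a / 2 ^ n₀) (dist q a) hτmem ⟨hqa0, le_rfl⟩
      rw [hτL] at h
      rw [h, abs_of_nonpos (by linarith [hτmem.2])]
      ring
    have hshift2 : dist q (γ T) / 2 ^ n₀ - dist q a / 2 ^ n₀ ≤ μ / 2 ^ n₀ := by
      have h1 : (dist q (γ T) - dist q a) / 2 ^ n₀ ≤ μ / 2 ^ n₀ := by
        gcongr
        linarith [le_abs_self (dist q (γ T) - dist q a), hA'Aq]
      have h2 : (dist q (γ T) - dist q a) / 2 ^ n₀
          = dist q (γ T) / 2 ^ n₀ - dist q a / 2 ^ n₀ := by ring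
      linarith [h2 ▸ h1]
    have htri2 := dist_triangle4 c (τ' (dist q (γ T) / 2 ^ n₀)) (τ (dist q a / 2 ^ n₀)) a
    have hG2 : dist a c ≤ dist a q + busemann γ q + (7/2) * ν := by
      rw [hτdist] at htri2
      linarith [htri2, hcx', hcomp2, hmul, hshift2, hDca, hAq]
    refine abs_le.mpr ⟨by linarith [hG2, hν0.le], by linarith [hG1, hν0.le]⟩
end
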